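/- arXiv:1504.08191 — 5 statements merged into one kernel-verified Lean document; each statement's English description precedes it below -/
import Mathlib

section
/- If (x₁,…,x_n) ∈ Xⁿ is such that some permutation (x_{i₁},…,x_{i_n}) of its coordinates is a positively recurrent point of the product system (Xⁿ, T×⋯×T), then the finite set {x₁,…,x_n} is a positively recurrent point of (K(X), T_K). Consequently, if n-th symmetric product K_n(X) (sets of cardinality ≤ n) is pointwise positively recurrent, then (Xⁿ, T^{(n)}) is pointwise positively recurrent. -/
open TopologicalSpace Metric Set

/-- The induced map `T_K` on the hyperspace of nonempty compact subsets. -/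
noncomputable def inducedMap {X : Type*} [MetricSpace X] {T : X → X} (hT : Continuous T)
    (A : NonemptyCompacts X) : NonemptyCompacts X :=
  ⟨⟨T '' A, A.isCompact.image hT⟩, A.nonempty.image T⟩

/-- The finite subset `{x₁, …, xₙ}` as an element of the hyperspace. -/
noncomputable def finiteSet {X : Type*} [MetricSpace X] {n : ℕ} (hn : 0 < n)
    (x : Fin n → X) : NonemptyCompacts X :=
  ⟨⟨Set.range x, (Set.finite_range x).isCompact⟩, @Set.range_nonempty _ _ ⟨⟨0, hn⟩⟩ x⟩

/-- A point `x` is positively recurrent for `T`. -/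
def RecurrentPt {Y : Type*} [MetricSpace Y] (T : Y → Y) (x : Y) : Prop :=
  ∀ ε > (0:ℝ), ∀ N : ℕ, ∃ m ≥ N, dist (T^[m] x) x < ε

/-- `z` is in the (metric) omega-limit-like set of `x`. -/
def OmegaPt {Y : Type*} [MetricSpace Y] (T : Y → Y) (x z : Y) : Prop :=
  ∀ ε > (0:ℝ), ∀ N : ℕ, ∃ m ≥ N, dist (T^[m] x) z < ε

lemma piIter {X : Type*} {T : X → X} {n : ℕ} (m : ℕ) (x : Fin n → X) :
    (fun f (i : Fin n) => T (f i))^[m] x = fun i => T^[m] (x i) := by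
  induction m with
  | zero => simp
  | succ m ih =>
      rw [Function.iterate_succ_apply', ih]
      funext i
      simp [Function.iterate_succ_apply']

lemma dist_comp_perm {X : Type*} [MetricSpace X] {n : ℕ} (f g : Fin n → X)
    (σ : Equiv.Perm (Fin n)) : dist (f ∘ σ) (g ∘ σ) = dist f g := by
  apply le_antisymm
  · rw [dist_pi_le_iff dist_nonneg]
    intro i
    exact dist_le_pi_dist f g (σ i)
  · rw [dist_pi_le_iff dist_nonneg]
    intro i
    have := dist_le_pi_dist (f ∘ σ) (g ∘ σ) (σ.symm i)
    simpa using this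

lemma OmegaPt.trans' {Y : Type*} [MetricSpace Y] {T : Y → Y} (hT : Continuous T) {x z w : Y}
    (h1 : OmegaPt T x z) (h2 : OmegaPt T z w) : OmegaPt T x w := by
  intro ε hε N
  obtain ⟨m, -, hm⟩ := h2 (ε / 2) (by linarith) 0
  obtain ⟨δ, hδ, hcont⟩ := Metric.continuous_iff.mp (hT.iterate m) z (ε / 2) (by linarith)
  obtain ⟨m', hm'N, hm'⟩ := h1 δ hδ N
  refine ⟨m + m', le_trans hm'N (Nat.le_add_left _ _), ?_⟩
  rw [Function.iterate_add_apply]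
  calc dist (T^[m] (T^[m'] x)) w ≤ dist (T^[m] (T^[m'] x)) (T^[m] z) + dist (T^[m] z) w :=
        dist_triangle _ _ _
    _ < ε / 2 + ε / 2 := add_lt_add (hcont _ hm') hm
    _ = ε := by ring

lemma recurrent_of_omega_perm {X : Type*} [MetricSpace X] {T : X → X} (hT : Continuous T)
    {n : ℕ} {x : Fin n → X} {σ : Equiv.Perm (Fin n)}
    (h : OmegaPt (fun f i => T (f i)) x (x ∘ σ)) :
    RecurrentPt (fun f i => T (f i)) x := by
  set Tn : (Fin n → X) → (Fin n → X) := fun f i => T (f i) with hTn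
  have hTnc : Continuous Tn := continuous_pi fun i => hT.comp (continuous_apply i)
  -- shifting by a permutation
  have key : ∀ τ : Equiv.Perm (Fin n), OmegaPt Tn (x ∘ τ) ((x ∘ σ) ∘ τ) := by
    intro τ ε hε N
    obtain ⟨m, hmN, hm⟩ := h ε hε N
    refine ⟨m, hmN, ?_⟩
    have hiter : Tn^[m] (x ∘ τ) = (Tn^[m] x) ∘ τ := by
      rw [hTn, piIter, piIter]; rfl
    rw [hiter, dist_comp_perm]
    exact hm
  have hk : ∀ k : ℕ, OmegaPt Tn x (x ∘ (σ ^ (k + 1) : Equiv.Perm (Fin n))) := by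
    intro k
    induction k with
    | zero => simpa using h
    | succ k ih =>
        have h2 := key (σ ^ (k + 1))
        have hcomp : (x ∘ σ) ∘ (σ ^ (k + 1) : Equiv.Perm (Fin n))
            = x ∘ (σ ^ (k + 2) : Equiv.Perm (Fin n)) := by
          funext i
          simp [pow_succ' σ (k + 1), Equiv.Perm.mul_apply, Function.comp]
        rw [hcomp] at h2
        exact ih.trans' hTnc h2
  have hord : 0 < orderOf σ := orderOf_pos σ
  have := hk (orderOf σ - 1)
  rw [Nat.sub_add_cancel hord, pow_orderOf_eq_one σ] at this
  simpa [RecurrentPt, OmegaPt] using this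

lemma inducedMap_iterate_coe {X : Type*} [MetricSpace X] {T : X → X} (hT : Continuous T)
    (m : ℕ) (A : NonemptyCompacts X) :
    (((inducedMap hT)^[m] A : NonemptyCompacts X) : Set X) = T^[m] '' (A : Set X) := by
  induction m with
  | zero => simp
  | succ m ih =>
      rw [Function.iterate_succ_apply']
      show T '' (((inducedMap hT)^[m] A : NonemptyCompacts X) : Set X) = _
      rw [ih, ← Set.image_comp, ← Function.iterate_succ']

lemma exists_perm_omega {X : Type*} [MetricSpace X] [CompactSpace X] {T : X → X}
    (hT : Continuous T) {n : ℕ} (hn : 0 < n) (x : Fin n → X) (hx : Function.Injective x)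
    (hA : RecurrentPt (inducedMap hT) (finiteSet hn x)) :
    ∃ σ : Equiv.Perm (Fin n), OmegaPt (fun f i => T (f i)) x (x ∘ σ) := by
  -- separation constant
  obtain ⟨δ₀, hδ₀, hsep⟩ : ∃ δ₀ > (0:ℝ), ∀ i j, i ≠ j → δ₀ ≤ dist (x i) (x j) := by
    set s : Finset ℝ :=
      (Finset.univ.offDiag : Finset (Fin n × Fin n)).image fun p => dist (x p.1) (x p.2) with hs
    rcases s.eq_empty_or_nonempty with hse | hse
    · refine ⟨1, one_pos, fun i j hij => ?_⟩
      exfalso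
      have hmem : dist (x i) (x j) ∈ s := Finset.mem_image.mpr ⟨(i, j),
        Finset.mem_offDiag.mpr ⟨Finset.mem_univ _, Finset.mem_univ _, hij⟩, rfl⟩
      rw [hse] at hmem
      exact Finset.notMem_empty _ hmem
    · refine ⟨s.min' hse, ?_, fun i j hij => ?_⟩
      · obtain ⟨p, hp, hpe⟩ := Finset.mem_image.mp (s.min'_mem hse)
        rw [← hpe]
        exact dist_pos.mpr fun he => (Finset.mem_offDiag.mp hp).2.2 (hx he)
      · exact s.min'_le _ (Finset.mem_image.mpr ⟨(i, j), Finset.mem_offDiag.mpr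
          ⟨Finset.mem_univ _, Finset.mem_univ _, hij⟩, rfl⟩)
  -- for each k, find a return time past k with a permutation matching
  have key : ∀ k : ℕ, ∃ m ≥ k, ∃ σ : Equiv.Perm (Fin n),
      ∀ i, dist (T^[m] (x i)) (x (σ i)) < min (1 / (k + 1 : ℝ)) (δ₀ / 3) := by
    intro k
    set r : ℝ := min (1 / (k + 1 : ℝ)) (δ₀ / 3) with hr
    have hrpos : 0 < r := lt_min (by positivity) (by linarith)
    obtain ⟨m, hmk, hm⟩ := hA r hrpos k
    refine ⟨m, hmk, ?_⟩
    have hdist : dist ((inducedMap hT)^[m] (finiteSet hn x)) (finiteSet hn x)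
        = hausdorffDist (T^[m] '' Set.range x) (Set.range x) := by
      rw [NonemptyCompacts.dist_eq, inducedMap_iterate_coe]
      rfl
    rw [hdist] at hm
    have hrne : (Set.range x).Nonempty := ⟨x ⟨0, hn⟩, Set.mem_range_self _⟩
    have hne : EMetric.hausdorffEdist (T^[m] '' Set.range x) (Set.range x) ≠ ⊤ := by
      apply Metric.hausdorffEdist_ne_top_of_nonempty_of_bounded
      · exact hrne.image _
      · exact hrne
      · exact (((Set.finite_range x).isCompact.image (hT.iterate m))).isBounded
      · exact (Set.finite_range x).isCompact.isBounded
    -- each T^[m] (x i) is close to a unique x j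
    have H1 : ∀ i : Fin n, ∃ j : Fin n, dist (T^[m] (x i)) (x j) < r := by
      intro i
      obtain ⟨y, hy, hdy⟩ := Metric.exists_dist_lt_of_hausdorffDist_lt
        (Set.mem_image_of_mem _ (Set.mem_range_self i)) hm hne
      obtain ⟨j, rfl⟩ := hy
      exact ⟨j, hdy⟩
    choose g hg using H1
    -- g is surjective
    have hgsurj : Function.Surjective g := by
      intro j
      obtain ⟨y, hy, hdy⟩ := Metric.exists_dist_lt_of_hausdorffDist_lt'
        (Set.mem_range_self j) hm hne
      obtain ⟨z, ⟨i, rfl⟩, rfl⟩ := hy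
      refine ⟨i, by_contra fun hne' => ?_⟩
      have h1 : dist (x (g i)) (x j) ≤ dist (x (g i)) (T^[m] (x i)) + dist (T^[m] (x i)) (x j) :=
        dist_triangle _ _ _
      have h2 : dist (x (g i)) (T^[m] (x i)) < r := by rw [dist_comm]; exact hg i
      have h3 : r ≤ δ₀ / 3 := min_le_right _ _
      have h4 := hsep (g i) j hne'
      linarith
    have hgbij : Function.Bijective g := ⟨Finite.injective_iff_surjective.mpr hgsurj, hgsurj⟩
    exact ⟨Equiv.ofBijective g hgbij, hg⟩
  choose m hm σ hσ using key
  -- pigeonhole: one permutation occurs infinitely often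
  obtain ⟨σ₀, hσ₀⟩ := Finite.exists_infinite_fiber σ
  refine ⟨σ₀, ?_⟩
  intro ε hε N
  obtain ⟨K, hK⟩ := exists_nat_one_div_lt hε
  obtain ⟨k, hk, hklt⟩ := (Set.infinite_coe_iff.mp hσ₀).exists_gt (max N K)
  have hkσ : σ k = σ₀ := hk
  refine ⟨m k, le_trans (le_trans (le_max_left _ _) hklt.le) (hm k), ?_⟩
  rw [dist_pi_lt_iff hε]
  intro i
  have h1 := hσ k i
  rw [hkσ] at h1
  have h2 : (1 : ℝ) / (k + 1) ≤ 1 / (K + 1) := by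
    apply one_div_le_one_div_of_le (by positivity)
    have : (K : ℝ) ≤ k := by
      exact_mod_cast (le_trans (le_max_right N K) hklt.le)
    linarith
  have h3 : dist (T^[m k] (x i)) (x (σ₀ i)) < ε :=
    lt_of_lt_of_le h1 (le_trans (min_le_left _ _) (le_trans h2 hK.le))
  have h4 : (fun f (i : Fin n) => T (f i))^[m k] x i = T^[m k] (x i) := by
    rw [piIter]
  rw [h4]
  exact h3

theorem recurrent_finiteSet_of_recurrent_tuple {X : Type*} [MetricSpace X] [CompactSpace X]
    (T : X → X) (hT : Continuous T) {n : ℕ} (hn : 0 < n) :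
    (∀ x : Fin n → X,
        (∃ σ : Equiv.Perm (Fin n), RecurrentPt (fun f i => T (f i)) (x ∘ σ)) →
          RecurrentPt (inducedMap hT) (finiteSet hn x)) ∧
      ((∀ A : NonemptyCompacts X,
            (∃ s : Finset X, ↑s = (A : Set X) ∧ s.card ≤ n) →
              RecurrentPt (inducedMap hT) A) →
        ∀ x : Fin n → X, RecurrentPt (fun f i => T (f i)) x) := by
  constructor
  · -- Part 1
    rintro x ⟨σ, hσ⟩
    have hx : RecurrentPt (fun f i => T (f i)) x := by
      intro ε hε N
      obtain ⟨m, hmN, hm⟩ := hσ ε hε N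
      refine ⟨m, hmN, ?_⟩
      have hiter : (fun f (i : Fin n) => T (f i))^[m] (x ∘ σ)
          = ((fun f (i : Fin n) => T (f i))^[m] x) ∘ σ := by
        rw [piIter, piIter]; rfl
      rw [hiter, dist_comp_perm] at hm
      exact hm
    intro ε hε N
    obtain ⟨m, hmN, hm⟩ := hx ε hε N
    refine ⟨m, hmN, ?_⟩
    have hdist : dist ((inducedMap hT)^[m] (finiteSet hn x)) (finiteSet hn x)
        = hausdorffDist (T^[m] '' Set.range x) (Set.range x) := by
      rw [NonemptyCompacts.dist_eq, inducedMap_iterate_coe]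
      rfl
    rw [hdist]
    set r : ℝ := dist ((fun f (i : Fin n) => T (f i))^[m] x) x with hrdef
    have hcoord : ∀ i, dist (T^[m] (x i)) (x i) ≤ r := by
      intro i
      have h0 : T^[m] (x i) = (fun f (i : Fin n) => T (f i))^[m] x i := by rw [piIter]
      rw [h0]
      exact dist_le_pi_dist _ _ i
    refine lt_of_le_of_lt (Metric.hausdorffDist_le_of_mem_dist dist_nonneg ?_ ?_) hm
    · rintro z ⟨y, ⟨i, rfl⟩, rfl⟩
      exact ⟨x i, Set.mem_range_self i, hcoord i⟩
    · rintro z ⟨i, rfl⟩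
      exact ⟨T^[m] (x i), Set.mem_image_of_mem _ (Set.mem_range_self i),
        by rw [dist_comm]; exact hcoord i⟩
  · -- Part 2
    intro hyp x
    classical
    set s : Finset X := Finset.univ.image x with hs
    have hsne : s.Nonempty := ⟨x ⟨0, hn⟩, Finset.mem_image.mpr ⟨⟨0, hn⟩, Finset.mem_univ _, rfl⟩⟩
    set k : ℕ := s.card with hk
    have hkpos : 0 < k := Finset.card_pos.mpr hsne
    -- injective enumeration of s
    let e : Fin k ≃ s := (s.equivFin).symm
    let y : Fin k → X := fun i => (e i : X)
    have hyinj : Function.Injective y := fun a b hab =>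
      e.injective (Subtype.ext hab)
    have hyrange : Set.range y = (s : Set X) := by
      ext z
      constructor
      · rintro ⟨i, rfl⟩; exact (e i).2
      · intro hz
        exact ⟨e.symm ⟨z, hz⟩, by simp [y]⟩
    have hcard : k ≤ n := by
      calc k = (Finset.univ.image x).card := rfl
        _ ≤ Finset.univ.card := Finset.card_image_le
        _ = n := by simp
    have hArec : RecurrentPt (inducedMap hT) (finiteSet hkpos y) := by
      apply hyp
      exact ⟨s, by rw [← hyrange]; rfl, hcard⟩
    obtain ⟨σ, hσ⟩ := exists_perm_omega hT hkpos y hyinj hArec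
    have hyrec : RecurrentPt (fun f (i : Fin k) => T (f i)) y :=
      recurrent_of_omega_perm hT hσ
    -- transfer recurrence from y to x
    intro ε hε N
    obtain ⟨m, hmN, hm⟩ := hyrec ε hε N
    refine ⟨m, hmN, ?_⟩
    rw [dist_pi_lt_iff hε]
    intro i
    have hxi : x i ∈ Set.range y := by
      rw [hyrange]
      exact Finset.mem_coe.mpr (Finset.mem_image.mpr ⟨i, Finset.mem_univ _, rfl⟩)
    obtain ⟨j, hj⟩ := hxi
    have h1 : dist ((fun f (i : Fin k) => T (f i))^[m] y j) (y j) < ε :=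
      lt_of_le_of_lt (dist_le_pi_dist _ _ j) hm
    rw [piIter] at h1
    have h2 : (fun f (i : Fin n) => T (f i))^[m] x i = T^[m] (x i) := by rw [piIter]
    rw [h2, ← hj]
    exact h1
end

section
/- Let X be a countable compact metric space and T : X → X a homeomorphism. If the hyperspace system (K(X), T_K) is pointwise recurrent (every A ∈ K(X) is positively or negatively recurrent), then every point of X is periodic. -/
open TopologicalSpace Metric Set

/-- The Cantor space is uncountable. -/
lemma aux_uncountable_cantor : Uncountable (ℕ → Bool) := by
  classical
  rw [← not_countable_iff]
  intro hc
  have h1 : Function.Injective (fun s : Set ℕ => fun n => decide (n ∈ s)) := by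
    intro s t hst
    ext n
    have := congrFun hst n
    simpa using this
  haveI : Countable (Set ℕ) := h1.countable
  obtain ⟨f, hf⟩ := exists_injective_nat (Set ℕ)
  exact Function.cantor_injective f hf

/-- singleton as a nonempty compact set -/
noncomputable def auxSingleton {X : Type*} [MetricSpace X] (x : X) : NonemptyCompacts X :=
  ⟨⟨{x}, isCompact_singleton⟩, Set.singleton_nonempty x⟩

lemma aux_inducedMap_iterate_singleton {X : Type*} [MetricSpace X] {T : X → X}
    (hT : Continuous T) (x : X) (m : ℕ) :
    (inducedMap hT)^[m] (auxSingleton x) = auxSingleton (T^[m] x) := by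
  induction m with
  | zero => rfl
  | succ n ih =>
    rw [Function.iterate_succ_apply', ih, Function.iterate_succ_apply']
    apply NonemptyCompacts.ext
    simp [inducedMap, auxSingleton]

lemma aux_recurrent_of_induced {X : Type*} [MetricSpace X] {T : X → X}
    (hT : Continuous T) (x : X)
    (hr : RecurrentPt (inducedMap hT) (auxSingleton x)) : RecurrentPt T x := by
  intro ε hε N
  obtain ⟨m, hm, hd⟩ := hr ε hε N
  refine ⟨m, hm, lt_of_le_of_lt ?_ hd⟩
  rw [aux_inducedMap_iterate_singleton, NonemptyCompacts.dist_eq]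
  have h1 : (T^[m] x) ∈ ((auxSingleton (T^[m] x) : NonemptyCompacts X) : Set X) :=
    mem_singleton _
  have h2 : EMetric.hausdorffEdist ((auxSingleton (T^[m] x) : NonemptyCompacts X) : Set X)
      ((auxSingleton x : NonemptyCompacts X) : Set X) ≠ ⊤ :=
    hausdorffEdist_ne_top_of_nonempty_of_bounded (singleton_nonempty _) (singleton_nonempty _)
      Bornology.isBounded_singleton Bornology.isBounded_singleton
  have := infDist_le_hausdorffDist_of_mem h1 h2
  rwa [show ((auxSingleton x : NonemptyCompacts X) : Set X) = {x} from rfl,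
    infDist_singleton] at this

/-- A recurrent point of an injective continuous map on a countable compact
metric space is periodic. -/
lemma aux_periodic_of_recurrent {X : Type*} [MetricSpace X] [CompactSpace X] [Countable X]
    {f : X → X} (hf : Continuous f) (hinj : Function.Injective f) {x : X}
    (hr : RecurrentPt f x) : ∃ n ≥ 1, f^[n] x = x := by
  set Y : Set X := closure (Set.range fun n : ℕ => f^[n] x) with hY
  have horb : ∀ n : ℕ, f^[n] x ∈ Y := fun n => subset_closure ⟨n, rfl⟩
  -- Y has a point that is not an accumulation point of Y
  have hiso : ∃ y ∈ Y, ¬ AccPt y (Filter.principal Y) := by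
    by_contra hcon
    push_neg at hcon
    have hperf : Perfect Y := ⟨isClosed_closure, fun y hy => hcon y hy⟩
    obtain ⟨g, -, -, hg⟩ := hperf.exists_nat_bool_injection ⟨x, horb 0⟩
    haveI := aux_uncountable_cantor
    haveI := hg.uncountable
    exact not_uncountable (α := X) inferInstance
  obtain ⟨y, hyY, hacc⟩ := hiso
  -- extract an isolating ball
  rw [AccPt] at hacc
  have hbot : nhdsWithin y {y}ᶜ ⊓ Filter.principal Y = ⊥ := by
    by_contra hne
    exact hacc ⟨hne⟩
  rw [nhdsWithin, inf_assoc, Filter.inf_principal] at hbot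
  rw [Filter.inf_principal_eq_bot] at hbot
  obtain ⟨ε, hε, hball⟩ := Metric.mem_nhds_iff.mp hbot
  have hkey : ∀ z ∈ Y, dist z y < ε → z = y := by
    intro z hz hd
    by_contra hzy
    exact (hball hd) ⟨hzy, hz⟩
  -- y is an orbit point
  have hy' : ∃ a : ℕ, f^[a] x = y := by
    have := Metric.mem_closure_iff.mp hyY ε hε
    obtain ⟨z, ⟨a, rfl⟩, hz⟩ := this
    exact ⟨a, hkey _ (horb a) (by rwa [dist_comm] at hz)⟩
  obtain ⟨a, ha⟩ := hy'
  -- y is recurrent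
  have hry : RecurrentPt f y := by
    intro δ hδ N
    have hc : Continuous (f^[a]) := hf.iterate a
    obtain ⟨δ', hδ', hδ''⟩ := Metric.continuousAt_iff.mp hc.continuousAt δ hδ
    obtain ⟨m, hm, hd⟩ := hr δ' hδ' N
    refine ⟨m, hm, ?_⟩
    have := hδ'' hd
    rw [← ha]
    calc dist (f^[m] (f^[a] x)) (f^[a] x)
        = dist (f^[a] (f^[m] x)) (f^[a] x) := by
          rw [← Function.iterate_add_apply, ← Function.iterate_add_apply, Nat.add_comm]
      _ < δ := this
  -- conclude periodicity
  obtain ⟨m, hm, hd⟩ := hry ε hε 1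
  have hmem : f^[m] y ∈ Y := by rw [← ha, ← Function.iterate_add_apply]; exact horb _
  have : f^[m] y = y := hkey _ hmem hd
  rw [← ha, ← Function.iterate_add_apply, Nat.add_comm, Function.iterate_add_apply] at this
  have : f^[m] x = x := (hinj.iterate a) this
  exact ⟨m, hm, this⟩

theorem pointwise_periodic_of_countable_pointwise_recurrent_induced {X : Type*}
    [MetricSpace X] [CompactSpace X] [Countable X] (T : X ≃ₜ X)
    (h : ∀ A : NonemptyCompacts X,
      RecurrentPt (inducedMap T.continuous) A ∨ RecurrentPt (inducedMap T.symm.continuous) A) :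
    ∀ x : X, ∃ n ≥ 1, T^[n] x = x := by
  intro x
  rcases h (auxSingleton x) with hr | hr
  · exact aux_periodic_of_recurrent T.continuous T.injective
      (aux_recurrent_of_induced T.continuous x hr)
  · have hrx : RecurrentPt (T.symm : X → X) x :=
      aux_recurrent_of_induced T.symm.continuous x hr
    obtain ⟨n, hn, hfix⟩ := aux_periodic_of_recurrent T.symm.continuous T.symm.injective hrx
    refine ⟨n, hn, ?_⟩
    have hli : Function.LeftInverse (T : X → X) (T.symm : X → X) := T.apply_symm_apply
    have := (hli.iterate n) x
    rw [hfix] at this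
    exact this
end

section
/- Every nonempty countable compact metric space has an isolated point; consequently, if the orbit closure of a recurrent point x of a homeomorphism of a countable compact metric space is considered, then x is periodic. -/
open Metric Set

/-- Any nonempty countable compact metric space has an isolated point. -/
lemma aux_isolated (Z : Type*) [MetricSpace Z] [CompactSpace Z] [Countable Z] [Nonempty Z] :
    ∃ z : Z, IsOpen ({z} : Set Z) := by
  obtain ⟨z, hz⟩ := nonempty_interior_of_iUnion_of_closed
    (f := fun z : Z => ({z} : Set Z)) (fun z => isClosed_singleton)
    (by ext w; simp)
  refine ⟨z, ?_⟩
  have h1 : interior ({z} : Set Z) = {z} := by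
    obtain ⟨w, hw⟩ := hz
    have hwz : w = z := mem_singleton_iff.mp (interior_subset hw)
    rw [hwz] at hw
    exact Subset.antisymm interior_subset (singleton_subset_iff.mpr hw)
  rw [← h1]; exact isOpen_interior

/-- Isolated point in a closed subset of a countable compact metric space. -/
lemma aux_isolated_set {X : Type*} [MetricSpace X] [CompactSpace X] [Countable X]
    {Y : Set X} (hY : IsClosed Y) (hne : Y.Nonempty) :
    ∃ y ∈ Y, ∃ ε > (0:ℝ), ∀ z ∈ Y, dist z y < ε → z = y := by
  haveI : CompactSpace Y := isCompact_iff_compactSpace.mp (hY.isCompact)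
  haveI : Nonempty Y := hne.to_subtype
  obtain ⟨y, hy⟩ := aux_isolated Y
  obtain ⟨ε, hε, hball⟩ := Metric.isOpen_iff.mp hy y rfl
  refine ⟨y, y.2, ε, hε, fun z hz hdz => ?_⟩
  have : (⟨z, hz⟩ : Y) ∈ Metric.ball y ε := by
    simpa [Metric.mem_ball, Subtype.dist_eq] using hdz
  have := hball this
  simpa [Subtype.ext_iff] using this

lemma aux_recurrent {X : Type*} [MetricSpace X] [CompactSpace X] [Countable X]
    (S : X ≃ₜ X) (x : X) (hrec : RecurrentPt (⇑S) x) : ∃ n ≥ 1, S^[n] x = x := by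
  set A : Set X := Set.range (fun n : ℕ => S^[n] x) with hA
  set Y := closure A with hYdef
  have hxA : x ∈ A := ⟨0, rfl⟩
  have hxY : x ∈ Y := subset_closure hxA
  have hYc : IsClosed Y := isClosed_closure
  -- forward invariance
  have hmaps : ∀ z ∈ Y, S z ∈ Y := by
    intro z hz
    have h1 : Set.MapsTo (⇑S) A A := by
      rintro _ ⟨n, rfl⟩
      exact ⟨n + 1, by simp [Function.iterate_succ_apply']⟩
    exact (h1.closure S.continuous) hz
  have hmaps_iter : ∀ n : ℕ, ∀ z ∈ Y, S^[n] z ∈ Y := by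
    intro n
    induction n with
    | zero => intro z hz; simpa using hz
    | succ k ih =>
        intro z hz
        rw [Function.iterate_succ_apply']
        exact hmaps _ (ih z hz)
  obtain ⟨y, hyY, ε, hε, hiso⟩ := aux_isolated_set hYc ⟨x, hxY⟩
  -- find n with S^[n] x = y
  obtain ⟨a, haA, hay⟩ := Metric.mem_closure_iff.mp hyY ε hε
  have ha' : a = y := hiso a (subset_closure haA) (by rwa [dist_comm] at hay)
  obtain ⟨n, rfl⟩ := haA
  -- x is isolated in Y
  have hcont : Continuous (S^[n] : X → X) := S.continuous.iterate n
  obtain ⟨δ, hδ, hδball⟩ := Metric.continuousAt_iff.mp hcont.continuousAt ε hε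
  have hxiso : ∀ z ∈ Y, dist z x < δ → z = x := by
    intro z hz hdz
    have h1 : dist (S^[n] z) (S^[n] x) < ε := hδball hdz
    have ha'' : S^[n] x = y := ha'
    have h2 : S^[n] z = S^[n] x := by
      rw [ha''] at h1 ⊢
      exact hiso _ (hmaps_iter n z hz) h1
    exact S.injective.iterate n h2
  obtain ⟨m, hm1, hmd⟩ := hrec δ hδ 1
  exact ⟨m, hm1, hxiso _ (subset_closure ⟨m, rfl⟩) hmd⟩

theorem countable_compact_isolated_and_recurrent_periodic {X : Type*} [MetricSpace X]
    [CompactSpace X] [Countable X] [Nonempty X] :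
    (∃ x : X, IsOpen ({x} : Set X)) ∧
      (∀ T : X ≃ₜ X, ∀ x : X,
        (RecurrentPt (⇑T) x ∨ RecurrentPt (⇑T.symm) x) → ∃ n ≥ 1, T^[n] x = x) := by
  refine ⟨aux_isolated X, fun T x h => ?_⟩
  rcases h with h | h
  · exact aux_recurrent T x h
  · obtain ⟨n, hn1, hn⟩ := aux_recurrent T.symm x h
    refine ⟨n, hn1, ?_⟩
    have hli : Function.LeftInverse (⇑T) (⇑T.symm) := T.apply_symm_apply
    have := (hli.iterate n) x
    rw [hn] at this
    exact this
end

section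
/- Let (X,T) be a skew product T(y,g) = (Sy, φ(y)g) over a minimal equicontinuous system (Y,S) with compact metric group G and continuous φ : Y → G. If the set Y × {g} is a recurrent point of the induced hyperspace system (K(X), T_K) for some g ∈ G, then (X,T) is uniformly rigid. -/
open Metric Set

/-- A system is uniformly rigid if for every `ε > 0` there is `n ≥ 1` with
`d(T^n x, x) < ε` for every `x`. -/
def UniformlyRigid {X : Type*} [MetricSpace X] (T : X → X) : Prop :=
  ∀ ε > (0:ℝ), ∃ n ≥ 1, ∀ x, dist (T^[n] x) x < ε

/-- Recurrence of a compact set under the induced hyperspace dynamics, phrased with the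
Hausdorff distance between the iterated images and the set. -/
def SetRecurrent {X : Type*} [MetricSpace X] (T : X → X) (A : Set X) : Prop :=
  ∀ ε > (0:ℝ), ∀ N : ℕ, ∃ m ≥ N, Metric.hausdorffDist (T^[m] '' A) A < ε

/-! Writing `Tᵐ (y, h) = (Sᵐ y, cᵐ(y) h)`, recurrence of the fibre `Y × {g}` in the hyperspace
says that the cocycle `cᵐ` is uniformly close to `1` for suitable `m ≥ 1`. Since
`c^(m+n) = (cᵐ ∘ Sⁿ) cⁿ`, these times can be chosen so that every finite block sum of them
still has a uniformly small cocycle (an IP-set). For the equicontinuous minimal base, the times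
at which `Sⁿ` is uniformly close to the identity meet every such IP-set, and at a common time
`Tⁿ` is uniformly close to the identity. -/

open Filter Topology Pointwise Finset

section Cocycle

variable {Y G : Type*} [Monoid G]

def cocycle (S : Y → Y) (φ : Y → G) : ℕ → Y → G
  | 0 => fun _ => 1
  | m + 1 => fun y => φ (S^[m] y) * cocycle S φ m y

theorem cocycle_add (S : Y → Y) (φ : Y → G) (m n : ℕ) (y : Y) :
    cocycle S φ (m + n) y = cocycle S φ m (S^[n] y) * cocycle S φ n y := by
  induction m with
  | zero => simp [cocycle]
  | succ m ih =>
    rw [Nat.succ_add]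
    simp only [cocycle, ih, Function.iterate_add_apply, mul_assoc]

theorem skewProduct_iterate (S : Y → Y) (φ : Y → G) (m : ℕ) (p : Y × G) :
    (fun p : Y × G => (S p.1, φ p.1 * p.2))^[m] p = (S^[m] p.1, cocycle S φ m p.1 * p.2) := by
  induction m with
  | zero => simp [cocycle]
  | succ m ih =>
    rw [Function.iterate_succ_apply', ih, Function.iterate_succ_apply', cocycle, mul_assoc]

/-- Furstenberg's construction of an IP-set of return times: choosing `n k` so deep that
`cocycle (n k)` lies in a neighbourhood `V (k + 1)` with `V (k + 1) * V (k + 1) ⊆ V k`,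
every block sum `n k + ⋯ + n (l - 1)` has its cocycle in `V k ⊆ U`. -/
theorem exists_forall_cocycle_sum_Ico_mem [TopologicalSpace G] [ContinuousMul G]
    (S : Y → Y) (φ : Y → G) (hsmall : ∀ V ∈ 𝓝 (1 : G), ∃ m > 0, ∀ y, cocycle S φ m y ∈ V)
    {U : Set G} (hU : U ∈ 𝓝 1) :
    ∃ n : ℕ → ℕ, (∀ i, 0 < n i) ∧
      ∀ k l, k ≤ l → ∀ y, cocycle S φ (∑ i ∈ Ico k l, n i) y ∈ U := by
  choose! W hW hWmul using fun V (hV : V ∈ 𝓝 (1 : G)) => exists_nhds_one_split hV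
  set V : ℕ → Set G := fun k => W^[k] U
  have hV : ∀ k, V k ∈ 𝓝 1 := by
    intro k
    induction k with
    | zero => exact hU
    | succ k ih => simpa only [V, Function.iterate_succ_apply'] using hW _ ih
  have hV_succ : ∀ k, V (k + 1) = W (V k) := fun k => Function.iterate_succ_apply' W k U
  have hV_anti : Antitone V := antitone_nat_of_succ_le fun k v hv => by
    rw [hV_succ] at hv
    simpa using hWmul _ (hV k) v hv 1 (mem_of_mem_nhds (hW _ (hV k)))
  choose n hn_pos hn using fun k => hsmall (V (k + 1)) (hV (k + 1))
  have hblock : ∀ d k y, cocycle S φ (∑ i ∈ Ico k (k + d), n i) y ∈ V k := by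
    intro d
    induction d with
    | zero => intro k y; simpa [cocycle] using mem_of_mem_nhds (hV k)
    | succ d ih =>
      intro k y
      rw [sum_eq_sum_Ico_succ_bot (by omega), add_comm, cocycle_add,
        show k + (d + 1) = k + 1 + d by omega]
      exact hWmul _ (hV k) _ (hV_succ k ▸ ih (k + 1) _) _ (hV_succ k ▸ hn k y)
  refine ⟨n, hn_pos, fun k l hkl y => ?_⟩
  obtain ⟨d, rfl⟩ := Nat.exists_eq_add_of_le hkl
  exact hV_anti (Nat.zero_le k) (hblock d k y)

end Cocycle

theorem exists_lt_dist_lt {Z : Type*} [PseudoMetricSpace Z] [CompactSpace Z] (p : ℕ → Z)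
    {δ : ℝ} (hδ : 0 < δ) : ∃ k l, k < l ∧ dist (p k) (p l) < δ := by
  obtain ⟨a, ψ, hψ, hlim⟩ := CompactSpace.tendsto_subseq p
  obtain ⟨N, hN⟩ := Metric.cauchySeq_iff'.1 hlim.cauchySeq δ hδ
  exact ⟨ψ N, ψ (N + 1), hψ N.lt_succ_self, by simpa [dist_comm] using hN (N + 1) N.le_succ⟩

section Equicontinuous

variable {Y : Type*} [PseudoMetricSpace Y]

theorem exists_forall_dist_iterate_lt_of_dist_iterate_lt {S : Y → Y}
    (hS : UniformEquicontinuous fun n : ℕ => S^[n]) {y₀ : Y}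
    (hy₀ : Dense (range fun n : ℕ => S^[n] y₀)) {ε : ℝ} (hε : 0 < ε) :
    ∃ δ > 0, ∀ m, dist (S^[m] y₀) y₀ < δ → ∀ y, dist (S^[m] y) y < ε := by
  obtain ⟨δ, hδ, hδS⟩ := Metric.uniformEquicontinuous_iff.1 hS (ε / 3) (by positivity)
  refine ⟨δ, hδ, fun m hm y => ?_⟩
  obtain ⟨_, ⟨k, rfl⟩, hk⟩ := hy₀.exists_dist_lt y (lt_min hδ (by positivity : 0 < ε / 3))
  have hk' := lt_min_iff.1 hk
  have hmk : dist (S^[m] (S^[k] y₀)) (S^[k] y₀) < ε / 3 := by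
    rw [(Function.Commute.iterate_iterate_self S m k).eq]
    exact hδS _ _ hm k
  calc dist (S^[m] y) y
      ≤ dist (S^[m] y) (S^[m] (S^[k] y₀)) + dist (S^[m] (S^[k] y₀)) (S^[k] y₀)
          + dist (S^[k] y₀) y := dist_triangle4 _ _ _ _
    _ < ε / 3 + ε / 3 + ε / 3 := by
        gcongr
        · exact hδS _ _ hk'.1 m
        · rw [dist_comm]; exact hk'.2
    _ = ε := by ring

/-- The return times of an equicontinuous invertible system form an IP*-set: pigeonholing
the points `S⁻ᵗ y₀`, `t = n 0 + ⋯ + n (k - 1)`, and pushing two close ones forward by the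
larger time. -/
theorem exists_lt_dist_iterate_sum_Ico_lt [CompactSpace Y] (S : Y ≃ Y)
    (hS : UniformEquicontinuous fun n : ℕ => (⇑S)^[n]) (y₀ : Y) {δ : ℝ} (hδ : 0 < δ)
    (n : ℕ → ℕ) : ∃ k l, k < l ∧ dist ((⇑S)^[∑ i ∈ Ico k l, n i] y₀) y₀ < δ := by
  obtain ⟨δ', hδ', hδS⟩ := Metric.uniformEquicontinuous_iff.1 hS δ hδ
  set t : ℕ → ℕ := fun k => ∑ i ∈ range k, n i
  obtain ⟨k, l, hkl, hclose⟩ := exists_lt_dist_lt (fun k => (⇑S.symm)^[t k] y₀) hδ'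
  refine ⟨k, l, hkl, ?_⟩
  have hS_symm : ∀ m y, (⇑S)^[m] ((⇑S.symm)^[m] y) = y :=
    fun m => Function.RightInverse.iterate S.apply_symm_apply m
  have ht : t l = ∑ i ∈ Ico k l, n i + t k := by
    rw [add_comm]; exact (sum_range_add_sum_Ico n hkl.le).symm
  have hkl_close := hδS _ _ hclose (t l)
  rwa [hS_symm, ht, Function.iterate_add_apply, hS_symm] at hkl_close

end Equicontinuous

theorem exists_forall_dist_mul_lt_imp_mem {G : Type*} [MetricSpace G] [Group G]
    [IsTopologicalGroup G] (g : G) {U : Set G} (hU : U ∈ 𝓝 1) :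
    ∃ δ > 0, ∀ c, dist (c * g) g < δ → c ∈ U := by
  have : (· * g⁻¹) ⁻¹' U ∈ 𝓝 g :=
    (continuous_mul_const g⁻¹).continuousAt.preimage_mem_nhds (by simpa using hU)
  obtain ⟨δ, hδ, hball⟩ := Metric.mem_nhds_iff.1 this
  exact ⟨δ, hδ, fun c hc => by simpa using hball hc⟩

section SkewProduct

variable {Y G : Type*} [MetricSpace Y] [BoundedSpace Y] [MetricSpace G] [BoundedSpace G]

theorem dist_snd_lt_of_mem_of_hausdorffDist_lt {s : Set (Y × G)} {p : Y × G} (hp : p ∈ s)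
    {g : G} {δ : ℝ} (h : hausdorffDist s (univ ×ˢ {g}) < δ) : dist p.2 g < δ := by
  obtain ⟨q, ⟨-, hq⟩, hpq⟩ := exists_dist_lt_of_hausdorffDist_lt hp h
    (hausdorffEDist_ne_top_of_nonempty_of_bounded ⟨p, hp⟩ ⟨(p.1, g), mem_univ _, rfl⟩
      (Bornology.IsBounded.all _) (Bornology.IsBounded.all _))
  rw [Prod.dist_eq, mem_singleton_iff.1 hq] at hpq
  exact (le_max_right _ _).trans_lt hpq

variable [Group G] [IsTopologicalGroup G]

theorem exists_cocycle_mem_of_setRecurrent (S : Y → Y) (φ : Y → G) {g : G}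
    (h : SetRecurrent (fun p : Y × G => (S p.1, φ p.1 * p.2)) (univ ×ˢ {g}))
    {U : Set G} (hU : U ∈ 𝓝 1) : ∃ m > 0, ∀ y, cocycle S φ m y ∈ U := by
  obtain ⟨δ, hδ, hδU⟩ := exists_forall_dist_mul_lt_imp_mem g hU
  obtain ⟨m, hm, hd⟩ := h δ hδ 1
  refine ⟨m, hm, fun y => hδU _ ?_⟩
  have hp := mem_image_of_mem (fun p : Y × G => (S p.1, φ p.1 * p.2))^[m]
    (show (y, g) ∈ univ ×ˢ {g} from ⟨mem_univ y, rfl⟩)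
  simpa [skewProduct_iterate] using dist_snd_lt_of_mem_of_hausdorffDist_lt hp hd

/-- The inverse skew product undoes `m` steps of the forward one, so it carries `(Sᵐ y, g)` to
`(y, (cocycle S φ m y)⁻¹ * g)`. -/
theorem exists_cocycle_mem_of_setRecurrent_symm (S : Y ≃ Y) (φ : Y → G) {g : G}
    (h : SetRecurrent (fun p : Y × G => (S.symm p.1, (φ (S.symm p.1))⁻¹ * p.2)) (univ ×ˢ {g}))
    {U : Set G} (hU : U ∈ 𝓝 1) : ∃ m > 0, ∀ y, cocycle S φ m y ∈ U := by
  obtain ⟨δ, hδ, hδU⟩ := exists_forall_dist_mul_lt_imp_mem g (inv_mem_nhds_one G hU)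
  obtain ⟨m, hm, hd⟩ := h δ hδ 1
  refine ⟨m, hm, fun y => Set.inv_mem_inv.1 (hδU (cocycle S φ m y)⁻¹ ?_)⟩
  have hinv : Function.LeftInverse (fun p : Y × G => (S.symm p.1, (φ (S.symm p.1))⁻¹ * p.2))
      (fun p : Y × G => (S p.1, φ p.1 * p.2)) := fun p => by simp
  have hp := mem_image_of_mem
    (fun p : Y × G => (S.symm p.1, (φ (S.symm p.1))⁻¹ * p.2))^[m]
    (show ((⇑S)^[m] y, g) ∈ univ ×ˢ {g} from ⟨mem_univ _, rfl⟩)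
  have hback := hinv.iterate m (y, (cocycle S φ m y)⁻¹ * g)
  rw [skewProduct_iterate, mul_inv_cancel_left] at hback
  simpa [hback] using dist_snd_lt_of_mem_of_hausdorffDist_lt hp hd

end SkewProduct

theorem exists_nhds_one_forall_dist_mul_lt {G : Type*} [MetricSpace G] [CompactSpace G]
    [Group G] [IsTopologicalGroup G] {ε : ℝ} (hε : 0 < ε) :
    ∃ U ∈ 𝓝 (1 : G), ∀ b ∈ U, ∀ h, dist (b * h) h < ε := by
  have := uniformity_eq_comap_nhds_one_swapped G ▸ Metric.dist_mem_uniformity hε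
  obtain ⟨U, hU, hUε⟩ := mem_comap.1 this
  exact ⟨U, hU, fun b hb h => @hUε (b * h, h) (by simpa using hb)⟩

theorem uniformlyRigid_of_skew_product_fiber_recurrent_general
    {Y : Type*} [MetricSpace Y] [CompactSpace Y]
    {G : Type*} [MetricSpace G] [CompactSpace G] [Group G] [IsTopologicalGroup G]
    (S : Y ≃ₜ Y)
    (hmin : ∀ y : Y, Dense (Set.range fun n : ℕ => (⇑S)^[n] y))
    (hequi : ∀ ε > (0:ℝ), ∃ δ > (0:ℝ), ∀ y y' : Y, dist y y' < δ →
      ∀ n : ℕ, dist ((⇑S)^[n] y) ((⇑S)^[n] y') < ε)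
    (φ : Y → G) (g : G)
    (hrec : SetRecurrent (fun p : Y × G => (S p.1, φ p.1 * p.2))
        (Set.univ ×ˢ {g}) ∨
      SetRecurrent (fun p : Y × G => (S.symm p.1, (φ (S.symm p.1))⁻¹ * p.2))
        (Set.univ ×ˢ {g})) :
    UniformlyRigid (fun p : Y × G => (S p.1, φ p.1 * p.2)) := by
  intro ε hε
  rcases isEmpty_or_nonempty Y with hY | ⟨⟨y₀⟩⟩
  · exact ⟨1, le_rfl, fun p => isEmptyElim p.1⟩
  have hS : UniformEquicontinuous fun n : ℕ => (⇑S)^[n] := Metric.uniformEquicontinuous_iff.2 hequi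
  obtain ⟨U, hU, hUε⟩ := exists_nhds_one_forall_dist_mul_lt (G := G) hε
  obtain ⟨n, hn_pos, hnU⟩ := exists_forall_cocycle_sum_Ico_mem S φ
    (fun V hV => hrec.elim (exists_cocycle_mem_of_setRecurrent S φ · hV)
      (exists_cocycle_mem_of_setRecurrent_symm S.toEquiv φ · hV)) hU
  obtain ⟨δ, hδ, hδS⟩ := exists_forall_dist_iterate_lt_of_dist_iterate_lt hS (hmin y₀) hε
  obtain ⟨k, l, hkl, hkl_close⟩ := exists_lt_dist_iterate_sum_Ico_lt S.toEquiv hS y₀ hδ n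
  refine ⟨∑ i ∈ Ico k l, n i, sum_pos (fun i _ => hn_pos i) (nonempty_Ico.2 hkl), fun p => ?_⟩
  rw [skewProduct_iterate, Prod.dist_eq]
  exact max_lt (hδS _ hkl_close p.1) (hUε _ (hnU k l hkl.le p.1) p.2)

theorem uniformlyRigid_of_skew_product_fiber_recurrent
    {Y : Type*} [MetricSpace Y] [CompactSpace Y]
    {G : Type*} [MetricSpace G] [CompactSpace G] [Group G] [IsTopologicalGroup G]
    (S : Y ≃ₜ Y)
    (hmin : ∀ y : Y, Dense (Set.range fun n : ℕ => (⇑S)^[n] y))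
    (hequi : ∀ ε > (0:ℝ), ∃ δ > (0:ℝ), ∀ y y' : Y, dist y y' < δ →
      ∀ n : ℕ, dist ((⇑S)^[n] y) ((⇑S)^[n] y') < ε)
    (φ : Y → G) (hφ : Continuous φ) (g : G)
    (hrec : SetRecurrent (fun p : Y × G => (S p.1, φ p.1 * p.2))
        (Set.univ ×ˢ {g}) ∨
      SetRecurrent (fun p : Y × G => (S.symm p.1, (φ (S.symm p.1))⁻¹ * p.2))
        (Set.univ ×ˢ {g})) :
    UniformlyRigid (fun p : Y × G => (S p.1, φ p.1 * p.2)) :=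
  uniformlyRigid_of_skew_product_fiber_recurrent_general S hmin hequi φ g hrec
end

section
/- Let (X,T) be a minimal system and suppose (X,T) is mildly mixing with |X| > 1. Then the hyperspace system (K(X),T_K) is not pointwise positively recurrent. More precisely: if for every pair of nonempty open sets U, V the transfer set N(U,V) is an IP*-set, and X has more than one point, then some A ∈ K(X) is not positively recurrent under T_K. -/
/-!
Separate two points by disjoint open sets `U` and `V`, and let `K ⊆ U` be a compact
neighbourhood of the first point. If `K` were recurrent for `T_K`, its return times to the open
set `{B | B ⊆ U}` of the hyperspace would form an IP-set (Furstenberg: choose return times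
`p k` into nested neighbourhoods `W (k + 1) = W k ∩ S^{-p k} W k`). Mild mixing makes
`N(interior K, V)` an IP*-set, so some `n` has both `T^n K ⊆ U` and `T^n w ∈ V` for a
`w ∈ interior K`, contradicting `U ∩ V = ∅`.
-/

open TopologicalSpace Metric Set

/-- A set of positive integers is an IP-set if it contains all finite sums of some
infinite sequence of positive integers. -/
def IsIPSet (Q : Set ℕ) : Prop :=
  ∃ p : ℕ → ℕ, (∀ i, 0 < p i) ∧
    ∀ s : Finset ℕ, s.Nonempty → (∑ i ∈ s, p i) ∈ Q

/-- A set is IP* if it meets every IP-set. -/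
def IsIPStar (S : Set ℕ) : Prop :=
  ∀ Q : Set ℕ, IsIPSet Q → (S ∩ Q).Nonempty

theorem RecurrentPt.exists_pos_iterate_mem {Y : Type*} [MetricSpace Y] {S : Y → Y} {a : Y}
    (ha : RecurrentPt S a) (U : OpenNhdsOf a) : ∃ n, 0 < n ∧ S^[n] a ∈ U := by
  obtain ⟨ε, hε, hball⟩ := Metric.isOpen_iff.1 U.isOpen a U.mem
  obtain ⟨n, hn, hdist⟩ := ha ε hε 1
  exact ⟨n, hn, hball hdist⟩

theorem iterate_sum_mem_of_subset_inter_preimage {Y : Type*} {S : Y → Y} {a : Y}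
    {U : ℕ → Set Y} {p : ℕ → ℕ} (hp : ∀ k, S^[p k] a ∈ U k)
    (hU : ∀ k, U (k + 1) ⊆ U k ∩ S^[p k] ⁻¹' U k) (s : Finset ℕ) (hs : s.Nonempty) (k : ℕ)
    (hks : ∀ i ∈ s, k ≤ i) : S^[∑ i ∈ s, p i] a ∈ U k := by
  have hanti : Antitone U := antitone_nat_of_succ_le fun k => (hU k).trans inter_subset_left
  induction s using Finset.induction_on_min generalizing k with
  | empty => exact absurd hs Finset.not_nonempty_empty
  | insert m s hms ih =>
    rw [Finset.sum_insert fun hm => (hms m hm).false]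
    apply hanti (hks m (Finset.mem_insert_self m s))
    rcases s.eq_empty_or_nonempty with rfl | hne
    · simpa using hp m
    · have hrest : S^[∑ i ∈ s, p i] a ∈ U (m + 1) := ih hne (m + 1) fun i hi => hms i hi
      rw [Function.iterate_add_apply]
      exact (hU m hrest).2

theorem isIPSet_setOf_iterate_mem_of_recurrent {Y : Type*} [TopologicalSpace Y] {S : Y → Y}
    (hS : Continuous S) {a : Y} (hrec : ∀ V : OpenNhdsOf a, ∃ n, 0 < n ∧ S^[n] a ∈ V)
    (U : OpenNhdsOf a) : IsIPSet {n | S^[n] a ∈ U} := by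
  choose ret hret_pos hret_mem using hrec
  let shrink (V : OpenNhdsOf a) : OpenNhdsOf a :=
    ⟨⟨V ∩ S^[ret V] ⁻¹' V, V.isOpen.inter (V.isOpen.preimage (hS.iterate _))⟩, V.mem, hret_mem V⟩
  let V (k : ℕ) : OpenNhdsOf a := shrink^[k] U
  have hV (k : ℕ) : (V (k + 1) : Set Y) ⊆ V k ∩ S^[ret (V k)] ⁻¹' V k := by
    simp only [V, Function.iterate_succ_apply']
    rfl
  exact ⟨fun k => ret (V k), fun k => hret_pos _, fun s hs =>
    iterate_sum_mem_of_subset_inter_preimage (fun k => hret_mem (V k)) hV s hs 0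
      fun i _ => Nat.zero_le i⟩

theorem coe_inducedMap_iterate {X : Type*} [MetricSpace X] {T : X → X} (hT : Continuous T)
    (A : NonemptyCompacts X) (n : ℕ) : ((inducedMap hT)^[n] A : Set X) = T^[n] '' A := by
  induction n with
  | zero => simp
  | succ n ih =>
    rw [Function.iterate_succ_apply', Function.iterate_succ', Set.image_comp, ← ih]
    rfl

theorem not_pointwise_recurrent_induced_of_mildly_mixing_general {X : Type*} [MetricSpace X]
    [CompactSpace X] (T : X → X) (hT : Continuous T)
    (hmm : ∀ U V : Set X, IsOpen U → IsOpen V → U.Nonempty → V.Nonempty →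
      IsIPStar {n : ℕ | (U ∩ T^[n] ⁻¹' V).Nonempty})
    (hcard : ∃ x y : X, x ≠ y) :
    ∃ A : NonemptyCompacts X, ¬ RecurrentPt (inducedMap hT) A := by
  by_contra! hrec
  obtain ⟨x, y, hxy⟩ := hcard
  obtain ⟨U, V, hU, hV, hxU, hyV, hUV⟩ := t2_separation hxy
  obtain ⟨K, hK, hxK, hKU⟩ := exists_compact_subset hU hxU
  let A : NonemptyCompacts X := ⟨⟨K, hK⟩, x, interior_subset hxK⟩
  let subsetsU : OpenNhdsOf A :=
    ⟨⟨{B | (B : Set X) ⊆ U}, NonemptyCompacts.isOpen_subsets_of_isOpen hU⟩, hKU⟩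
  have hreturn : IsIPSet {n | (inducedMap hT)^[n] A ∈ subsetsU} :=
    isIPSet_setOf_iterate_mem_of_recurrent hT.nonemptyCompacts_map
      (hrec A).exists_pos_iterate_mem subsetsU
  obtain ⟨n, ⟨w, hwK, hwV⟩, hn⟩ :=
    hmm (interior K) V isOpen_interior hV ⟨x, hxK⟩ ⟨y, hyV⟩ _ hreturn
  have hnU : T^[n] '' K ⊆ U := coe_inducedMap_iterate hT A n ▸ hn
  exact hUV.notMem_of_mem_left (hnU (mem_image_of_mem _ (interior_subset hwK))) hwV

theorem not_pointwise_recurrent_induced_of_mildly_mixing {X : Type*} [MetricSpace X]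
    [CompactSpace X] (T : X → X) (hT : Continuous T) (hsurj : Function.Surjective T)
    (hmin : ∀ x : X, Dense (Set.range fun n : ℕ => T^[n] x))
    (hmm : ∀ U V : Set X, IsOpen U → IsOpen V → U.Nonempty → V.Nonempty →
      IsIPStar {n : ℕ | (U ∩ T^[n] ⁻¹' V).Nonempty})
    (hcard : ∃ x y : X, x ≠ y) :
    ∃ A : NonemptyCompacts X, ¬ RecurrentPt (inducedMap hT) A :=
  not_pointwise_recurrent_induced_of_mildly_mixing_general T hT hmm hcard
end
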